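/- For any homogeneous polynomial f ∈ K[z_1,…,z_n] of degree d, one has (Sym^d J)(f) = Σ_{λ ⊨ d} z_1^{λ_1}⋯z_n^{λ_n} · Σ_{μ ≤ λ} C_{μ,λ} · m_{μ,λ} · [z^μ](f), where the outer sum is over all compositions λ of d with n parts and the inner sum is over all compositions μ of d with μ ≤ λ. -/

import Mathlib

open MvPolynomial Finset

noncomputable section

/-- `Kk p` is the fraction field of `ℂ[x_1,…,x_p, y]`, a polynomial ring in `p+1` variables
(so the paper's `n` is `p+1`). -/
abbrev Kk (p : ℕ) := FractionRing (MvPolynomial (Fin (p+1)) ℂ)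

variable {p : ℕ}

/-- the images `x_i` (for `i = 1, …, p`) in the fraction field -/
def xv (i : Fin p) : Kk p :=
  algebraMap (MvPolynomial (Fin (p+1)) ℂ) (Kk p) (X i.castSucc)

/-- the image of `y` in the fraction field -/
def yv : Kk p :=
  algebraMap (MvPolynomial (Fin (p+1)) ℂ) (Kk p) (X (Fin.last p))

/-- `(Sym^d J)`: the substitution `z_i ↦ y^{-a_i} z_i` for `i = 1, …, n-1` and
`z_n ↦ -∑_{i<n} a_i x_i y^{-a_i-1} z_i - y^{-2} z_n`. -/
def symJ (a : Fin p → ℤ) :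
    MvPolynomial (Fin (p+1)) (Kk p) →ₐ[Kk p] MvPolynomial (Fin (p+1)) (Kk p) :=
  aeval (Fin.lastCases
    (-(∑ i : Fin p, C ((a i : Kk p) * xv i * yv ^ (-(a i) - 1 : ℤ)) * X i.castSucc)
      - C (yv ^ (-2 : ℤ)) * X (Fin.last p))
    (fun i => C (yv ^ (-(a i) : ℤ)) * X i.castSucc))

/-- coefficient extraction `[z^λ]` -/
def coeffOf (lam : Fin (p+1) → ℕ) (h : MvPolynomial (Fin (p+1)) (Kk p)) : Kk p :=
  coeff (Finsupp.equivFunOnFinite.symm lam) h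

/-- `a · λ° = ∑_{i=1}^{n-1} a_i λ_i` -/
def aDot (a : Fin p → ℤ) (lam : Fin (p+1) → ℕ) : ℤ :=
  ∑ i : Fin p, a i * lam i.castSucc

/-- the monomial `m_{μ,λ} = (∏_{i<n} x_i^{λ_i - μ_i}) y^{-a·λ° - λ_n - μ_n}` -/
def mMono (a : Fin p → ℤ) (μ lam : Fin (p+1) → ℕ) : Kk p :=
  (∏ i : Fin p, xv i ^ (lam i.castSucc - μ i.castSucc)) *
    yv ^ (-(aDot a lam) - (lam (Fin.last p) : ℤ) - (μ (Fin.last p) : ℤ))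

/-- the integer coefficient
`C_{μ,λ} = (-1)^{μ_n} μ_n! / ((λ_1-μ_1)! ⋯ (λ_{n-1}-μ_{n-1})! λ_n!) ∏_{i<n} a_i^{λ_i-μ_i}` -/
def Cco (a : Fin p → ℤ) (μ lam : Fin (p+1) → ℕ) : ℤ :=
  (-1) ^ (μ (Fin.last p)) *
    (((μ (Fin.last p)).factorial /
      ((∏ i : Fin p, (lam i.castSucc - μ i.castSucc).factorial) *
        (lam (Fin.last p)).factorial) : ℕ) : ℤ) *
    ∏ i : Fin p, (a i) ^ (lam i.castSucc - μ i.castSucc)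

/-!
On a monomial `z^μ` the substitution produces `y^{-a·μ°} z^{μ°} (-1)^{μ_n} (∑_i b_i z_i)^{μ_n}`,
where `b_i = a_i x_i y^{-a_i-1}` for `i < n` and `b_n = y^{-2}`. Expanding the last power by the
multinomial theorem, the term of multi-index `k` (with `|k| = μ_n`) lands on `z^λ` for
`λ = μ° + k`, and `k ↦ μ° + k` is a bijection onto the compositions `λ ≥ μ` of `d`. Its
coefficient is `C_{μ,λ} m_{μ,λ}`: the multinomial coefficient is `μ_n!/∏ k_i!`, and the
exponent of `y` collapses to `-a·λ° - λ_n - μ_n` because `∑_{i<n} k_i = μ_n - λ_n`. Summing over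
the monomials of `f`, all of degree `d`, and exchanging the two sums gives the formula.
-/

section

variable {R : Type*} [CommSemiring R]

theorem MvPolynomial.monomial_equivFunOnFinite_symm {n : ℕ} (μ : Fin n → ℕ) (c : R) :
    monomial (Finsupp.equivFunOnFinite.symm μ) c = C c * ∏ i, X i ^ μ i := by
  rw [monomial_eq, Finsupp.prod_pow]
  simp

theorem MvPolynomial.IsHomogeneous.eq_sum_antidiagonalTuple {n d : ℕ}
    {f : MvPolynomial (Fin n) R} (hf : f.IsHomogeneous d) :
    f = ∑ μ ∈ Finset.Nat.antidiagonalTuple n d,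
      monomial (Finsupp.equivFunOnFinite.symm μ) (coeff (Finsupp.equivFunOnFinite.symm μ) f) := by
  ext ν
  simp only [coeff_sum, coeff_monomial, Equiv.symm_apply_eq]
  rw [Finset.sum_ite_eq', Equiv.symm_apply_apply]
  split_ifs with hν
  · rfl
  · refine hf.coeff_eq_zero ?_
    simpa [Finsupp.degree_eq_sum, Finset.Nat.mem_antidiagonalTuple] using hν

theorem MvPolynomial.pow_sum_C_mul_X {σ : Type*} [Fintype σ] [DecidableEq σ] (b : σ → R) (m : ℕ) :
    (∑ i, C (b i) * X i) ^ m =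
      ∑ k ∈ piAntidiag univ m, C (Nat.multinomial univ k * ∏ i, b i ^ k i) * ∏ i, X i ^ k i := by
  simp only [sum_pow_eq_sum_piAntidiag, mul_pow, prod_mul_distrib, map_mul, map_natCast,
    map_prod, map_pow, mul_assoc]

theorem prod_zpow_eq_zpow_sum {ι K : Type*} [CommGroupWithZero K] {y : K} (hy : y ≠ 0)
    (s : Finset ι) (e : ι → ℤ) : ∏ i ∈ s, y ^ e i = y ^ ∑ i ∈ s, e i := by
  induction s using Finset.cons_induction with
  | empty => simp
  | cons j s hj ih => rw [prod_cons, sum_cons, zpow_add₀ hy, ih]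

end

lemma yv_ne_zero : (yv : Kk p) ≠ 0 :=
  (map_ne_zero_iff _ (IsFractionRing.injective _ _)).mpr (X_ne_zero _)

def symJCoeff (a : Fin p → ℤ) : Fin (p+1) → Kk p :=
  Fin.lastCases (yv ^ (-2 : ℤ)) fun i => (a i : Kk p) * xv i * yv ^ (-(a i) - 1)

lemma symJ_X_castSucc (a : Fin p → ℤ) (i : Fin p) :
    symJ a (X i.castSucc) = C (yv ^ (-(a i))) * X i.castSucc := by
  simp [symJ]

lemma symJ_X_last (a : Fin p → ℤ) :
    symJ a (X (Fin.last p)) = -∑ i, C (symJCoeff a i) * X i := by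
  simp only [symJ, aeval_X, Fin.lastCases_last, Fin.lastCases_castSucc, symJCoeff,
    Fin.sum_univ_castSucc]
  ring

lemma symJ_prod_X_pow (a : Fin p → ℤ) (μ : Fin (p+1) → ℕ) :
    symJ a (∏ i, X i ^ μ i) =
      C (∏ i : Fin p, (yv ^ (-(a i))) ^ μ i.castSucc) *
        (∏ i, X i ^ Function.update μ (Fin.last p) 0 i) *
        (-1) ^ μ (Fin.last p) * (∑ i, C (symJCoeff a i) * X i) ^ μ (Fin.last p) := by
  rw [map_prod, Fin.prod_univ_castSucc, Fin.prod_univ_castSucc]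
  simp only [map_pow, symJ_X_castSucc, symJ_X_last, mul_pow, prod_mul_distrib, map_prod,
    Function.update_self, Function.update_of_ne (Fin.castSucc_ne_last _), pow_zero, mul_one]
  ring

-- `Nat.multinomial` is defined by the same truncated division, so no divisibility is needed.
lemma Cco_update_add (a : Fin p → ℤ) (μ k : Fin (p+1) → ℕ) (hk : ∑ i, k i = μ (Fin.last p)) :
    Cco a μ (Function.update μ (Fin.last p) 0 + k) =
      (-1) ^ μ (Fin.last p) * Nat.multinomial univ k * ∏ i : Fin p, a i ^ k i.castSucc := by
  simp [Cco, Nat.multinomial, hk, Fin.prod_univ_castSucc (n := p)]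

lemma prod_symJCoeff_pow (a : Fin p → ℤ) (k : Fin (p+1) → ℕ) :
    ∏ i, symJCoeff a i ^ k i =
      (∏ i : Fin p, (a i : Kk p) ^ k i.castSucc) *
        (∏ i : Fin p, (xv i * yv ^ (-(a i) - 1)) ^ k i.castSucc) *
        (yv ^ (-2 : ℤ)) ^ k (Fin.last p) := by
  simp only [Fin.prod_univ_castSucc, symJCoeff, Fin.lastCases_castSucc, Fin.lastCases_last,
    ← prod_mul_distrib, ← mul_pow, mul_assoc]

lemma mMono_update_add (a : Fin p → ℤ) (μ k : Fin (p+1) → ℕ) (hk : ∑ i, k i = μ (Fin.last p)) :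
    mMono a μ (Function.update μ (Fin.last p) 0 + k) =
      (∏ i : Fin p, (yv ^ (-(a i))) ^ μ i.castSucc) *
        (∏ i : Fin p, (xv i * yv ^ (-(a i) - 1)) ^ k i.castSucc) *
        (yv ^ (-2 : ℤ)) ^ k (Fin.last p) := by
  have hk' : ∑ i : Fin p, (k i.castSucc : ℤ) + k (Fin.last p) = μ (Fin.last p) := by
    exact_mod_cast (Fin.sum_univ_castSucc k).symm.trans hk
  have hexp : -aDot a (Function.update μ (Fin.last p) 0 + k)
      - ((Function.update μ (Fin.last p) 0 + k) (Fin.last p) : ℤ) - μ (Fin.last p) =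
      ∑ i : Fin p, -(a i) * μ i.castSucc + ∑ i : Fin p, (-(a i) - 1) * k i.castSucc
        + -2 * k (Fin.last p) := by
    simp only [aDot, Pi.add_apply, Function.update_self,
      Function.update_of_ne (Fin.castSucc_ne_last _)]
    push_cast
    simp only [mul_add, sub_mul, neg_mul, one_mul, sum_add_distrib, sum_sub_distrib,
      sum_neg_distrib]
    linarith
  rw [mMono, hexp, zpow_add₀ yv_ne_zero, zpow_add₀ yv_ne_zero,
    ← prod_zpow_eq_zpow_sum yv_ne_zero, ← prod_zpow_eq_zpow_sum yv_ne_zero]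
  simp only [Pi.add_apply, Function.update_of_ne (Fin.castSucc_ne_last _),
    Nat.add_sub_cancel_left, mul_pow, prod_mul_distrib, zpow_mul, zpow_natCast]
  ring

lemma map_piAntidiag_eq_filter_le {d : ℕ} {μ : Fin (p+1) → ℕ} (hμ : ∑ i, μ i = d) :
    (piAntidiag univ (μ (Fin.last p))).map
        (addLeftEmbedding (Function.update μ (Fin.last p) 0)) =
      (Nat.antidiagonalTuple (p+1) d).filter
        (fun lam => ∀ i : Fin p, μ i.castSucc ≤ lam i.castSucc) := by
  set μ' := Function.update μ (Fin.last p) 0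
  have hμ' : ∑ i : Fin p, μ i.castSucc = ∑ i, μ' i := by
    simp [μ', Fin.sum_univ_castSucc]
  have hsum : ∑ i, μ' i + μ (Fin.last p) = d := by
    rw [← hμ', ← hμ, Fin.sum_univ_castSucc]
  ext lam
  simp only [mem_map, mem_piAntidiag, mem_filter, Nat.mem_antidiagonalTuple, mem_univ,
    implies_true, and_true, addLeftEmbedding_apply]
  constructor
  · rintro ⟨k, hk, rfl⟩
    refine ⟨by simp only [Pi.add_apply]; rw [sum_add_distrib, hk, hsum], fun i => ?_⟩
    simp [μ']
  · rintro ⟨hlam, hle⟩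
    have hμ'le : μ' ≤ lam := fun j => by
      induction j using Fin.lastCases with
      | last => simp [μ']
      | cast i => simpa [μ', Function.update_of_ne (Fin.castSucc_ne_last _)] using hle i
    refine ⟨lam - μ', ?_, add_tsub_cancel_of_le hμ'le⟩
    change ∑ j, (lam j - μ' j) = _
    rw [sum_tsub_distrib _ fun j _ => hμ'le j]
    omega

lemma symJ_monomial (a : Fin p → ℤ) {d : ℕ} {μ : Fin (p+1) → ℕ} (hμ : ∑ i, μ i = d)
    (c : Kk p) :
    symJ a (monomial (Finsupp.equivFunOnFinite.symm μ) c) =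
      ∑ lam ∈ (Nat.antidiagonalTuple (p+1) d).filter
          (fun lam => ∀ i : Fin p, μ i.castSucc ≤ lam i.castSucc),
        monomial (Finsupp.equivFunOnFinite.symm lam) 1 * C (Cco a μ lam * mMono a μ lam * c) := by
  rw [← map_piAntidiag_eq_filter_le hμ, sum_map, monomial_equivFunOnFinite_symm, map_mul,
    symJ_prod_X_pow, pow_sum_C_mul_X]
  simp only [mul_sum]
  refine sum_congr rfl fun k hk_mem => ?_
  have hk : ∑ i, k i = μ (Fin.last p) := (mem_piAntidiag.mp hk_mem).1
  rw [addLeftEmbedding_apply, Cco_update_add a μ k hk, mMono_update_add a μ k hk,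
    prod_symJCoeff_pow, monomial_equivFunOnFinite_symm,
    show symJ a (C c) = C c from (symJ a).commutes c]
  simp only [Pi.add_apply, pow_add, prod_mul_distrib, map_mul, map_one, map_pow, map_neg,
    map_natCast, map_prod, map_intCast, Int.cast_mul, Int.cast_pow, Int.cast_neg, Int.cast_one,
    Int.cast_natCast, Int.cast_prod]
  ring

theorem symJ_eq_sum_compositions_general (p d : ℕ) (a : Fin p → ℤ)
    (f : MvPolynomial (Fin (p+1)) (Kk p)) (hf : f.IsHomogeneous d) :
    symJ a f =
      ∑ lam ∈ Finset.Nat.antidiagonalTuple (p+1) d,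
        monomial (Finsupp.equivFunOnFinite.symm lam) (1 : Kk p) *
          C (∑ μ ∈ (Finset.Nat.antidiagonalTuple (p+1) d).filter
                (fun μ => ∀ i : Fin p, μ i.castSucc ≤ lam i.castSucc),
              (Cco a μ lam : Kk p) * mMono a μ lam * coeffOf μ f) := by
  conv_lhs => rw [hf.eq_sum_antidiagonalTuple, map_sum]
  calc
    _ = ∑ μ ∈ Nat.antidiagonalTuple (p+1) d,
          ∑ lam ∈ (Nat.antidiagonalTuple (p+1) d).filter
              (fun lam => ∀ i : Fin p, μ i.castSucc ≤ lam i.castSucc),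
            monomial (Finsupp.equivFunOnFinite.symm lam) 1 *
              C (Cco a μ lam * mMono a μ lam * coeffOf μ f) :=
      sum_congr rfl fun μ hμ => symJ_monomial a (Nat.mem_antidiagonalTuple.mp hμ) _
    _ = _ := by
      simp only [map_sum, mul_sum]
      exact sum_comm' fun μ lam => by simp only [mem_filter]; tauto

/-- For any homogeneous polynomial `f` of degree `d`,
`(Sym^d J)(f) = ∑_{λ ⊨ d} z^λ ∑_{μ ≤ λ} C_{μ,λ} m_{μ,λ} [z^μ](f)`. -/
theorem symJ_eq_sum_compositions (p d : ℕ) (hp : 1 ≤ p) (hd : 1 ≤ d) (a : Fin p → ℤ)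
    (f : MvPolynomial (Fin (p+1)) (Kk p)) (hf : f.IsHomogeneous d) :
    symJ a f =
      ∑ lam ∈ Finset.Nat.antidiagonalTuple (p+1) d,
        monomial (Finsupp.equivFunOnFinite.symm lam) (1 : Kk p) *
          C (∑ μ ∈ (Finset.Nat.antidiagonalTuple (p+1) d).filter
                (fun μ => ∀ i : Fin p, μ i.castSucc ≤ lam i.castSucc),
              (Cco a μ lam : Kk p) * mMono a μ lam * coeffOf μ f) :=
  symJ_eq_sum_compositions_general p d a f hf

end
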